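/- ‖μ_t − θ*‖_{Σ_t^{-1} Σ̃_t Σ_t^{-1}} ≤ sup_{θ ∈ ℝ^d, ‖θ‖ ≤ S} ‖Σ_0^{-1}(μ_0 − θ)‖_{Σ̃_t} + σ^{-2} ‖ Σ_{i=1}^t w_i x_i η_i ‖_{Σ̃_t}. (This is a purely deterministic inequality; no probabilistic assumptions on the η_i are needed.) -/

import Mathlib

open Matrix Finset

/-- Euclidean norm of a vector in `Fin d → ℝ`. -/
noncomputable def eucNorm {d : ℕ} (v : Fin d → ℝ) : ℝ := Real.sqrt (v ⬝ᵥ v)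

/-- Weighted norm `‖v‖_M = √(vᵀ M v)`. -/
noncomputable def matNorm {d : ℕ} (M : Matrix (Fin d) (Fin d) ℝ) (v : Fin d → ℝ) : ℝ :=
  Real.sqrt (v ⬝ᵥ M.mulVec v)

/-- `Σ_t := (Σ_0⁻¹ + σ⁻² ∑ᵢ wᵢ xᵢxᵢᵀ)⁻¹` -/
noncomputable def SigM (d : ℕ) (σ : ℝ) (w : ℕ → ℝ) (x : ℕ → Fin d → ℝ)
    (S0 : Matrix (Fin d) (Fin d) ℝ) (t : ℕ) : Matrix (Fin d) (Fin d) ℝ :=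
  (S0⁻¹ + (σ ^ 2)⁻¹ • ∑ i ∈ Finset.Icc 1 t, w i • vecMulVec (x i) (x i))⁻¹

/-- `Σ̃_t := (Σ̃_0⁻¹ + σ⁻² ∑ᵢ wᵢ² xᵢxᵢᵀ)⁻¹` -/
noncomputable def TilM (d : ℕ) (σ : ℝ) (w : ℕ → ℝ) (x : ℕ → Fin d → ℝ)
    (St0 : Matrix (Fin d) (Fin d) ℝ) (t : ℕ) : Matrix (Fin d) (Fin d) ℝ :=
  (St0⁻¹ + (σ ^ 2)⁻¹ • ∑ i ∈ Finset.Icc 1 t, w i ^ 2 • vecMulVec (x i) (x i))⁻¹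

/-- `μ_t := Σ_t (Σ_0⁻¹ μ_0 + σ⁻² ∑ᵢ wᵢ yᵢ xᵢ)` -/
noncomputable def muV (d : ℕ) (σ : ℝ) (w : ℕ → ℝ) (x : ℕ → Fin d → ℝ) (y : ℕ → ℝ)
    (S0 : Matrix (Fin d) (Fin d) ℝ) (μ0 : Fin d → ℝ) (t : ℕ) : Fin d → ℝ :=
  (SigM d σ w x S0 t).mulVec
    (S0⁻¹.mulVec μ0 + (σ ^ 2)⁻¹ • ∑ i ∈ Finset.Icc 1 t, (w i * y i) • x i)

/-! Since `Σ_t⁻¹ θ* = Σ_0⁻¹ θ* + σ⁻² ∑ wᵢ ⟨θ*, xᵢ⟩ xᵢ` and `yᵢ - ⟨θ*, xᵢ⟩ = ηᵢ`, the error is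
`μ_t - θ* = Σ_t (Σ_0⁻¹ (μ_0 - θ*) + σ⁻² ∑ wᵢ ηᵢ xᵢ)`, so its `Σ_t⁻¹ Σ̃_t Σ_t⁻¹`-norm is the
`Σ̃_t`-norm of the bracket. The triangle inequality for the seminorm `‖·‖_{Σ̃_t}` splits this into
the two terms, and the first is bounded by the supremum because `θ*` lies in the ball of radius
`S`, on which the supremum is finite by compactness. -/

section Norms

variable {d : ℕ}

lemma eucNorm_eq_norm_toLp (v : Fin d → ℝ) : eucNorm v = ‖WithLp.toLp 2 v‖ := by
  rw [eucNorm, EuclideanSpace.norm_eq]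
  simp [dotProduct, sq]

lemma isCompact_setOf_eucNorm_le (S : ℝ) : IsCompact {θ : Fin d → ℝ | eucNorm θ ≤ S} := by
  refine (isCompact_closedBall (0 : Fin d → ℝ) S).of_isClosed_subset ?_ fun θ hθ => ?_
  · simp only [eucNorm_eq_norm_toLp]
    exact isClosed_le (by fun_prop) continuous_const
  · replace hθ : ‖WithLp.toLp 2 θ‖ ≤ S := (eucNorm_eq_norm_toLp θ).symm.trans_le hθ
    rw [mem_closedBall_zero_iff, pi_norm_le_iff_of_nonneg ((norm_nonneg _).trans hθ)]
    exact fun i => (PiLp.norm_apply_le (WithLp.toLp 2 θ) i).trans hθ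

open scoped MatrixOrder in
lemma Matrix.PosSemidef.exists_matNorm_eq_eucNorm {M : Matrix (Fin d) (Fin d) ℝ}
    (hM : M.PosSemidef) :
    ∃ B : Matrix (Fin d) (Fin d) ℝ, ∀ v, matNorm M v = eucNorm (B *ᵥ v) := by
  obtain ⟨B, rfl⟩ := CStarAlgebra.nonneg_iff_eq_star_mul_self.mp hM.nonneg
  refine ⟨B, fun v => ?_⟩
  rw [matNorm, eucNorm, ← mulVec_mulVec, dotProduct_mulVec, star_eq_conjTranspose,
    vecMul_conjTranspose, star_trivial, star_trivial]

lemma matNorm_add_le {M : Matrix (Fin d) (Fin d) ℝ} (hM : M.PosSemidef) (u v : Fin d → ℝ) :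
    matNorm M (u + v) ≤ matNorm M u + matNorm M v := by
  obtain ⟨B, hB⟩ := hM.exists_matNorm_eq_eucNorm
  simp only [hB, mulVec_add, eucNorm_eq_norm_toLp, WithLp.toLp_add]
  exact norm_add_le _ _

lemma matNorm_smul {M : Matrix (Fin d) (Fin d) ℝ} (hM : M.PosSemidef) (c : ℝ) (v : Fin d → ℝ) :
    matNorm M (c • v) = |c| * matNorm M v := by
  obtain ⟨B, hB⟩ := hM.exists_matNorm_eq_eucNorm
  simp only [hB, mulVec_smul, eucNorm_eq_norm_toLp, WithLp.toLp_smul, norm_smul, Real.norm_eq_abs]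

lemma continuous_matNorm (M : Matrix (Fin d) (Fin d) ℝ) : Continuous (matNorm M) := by
  unfold matNorm
  fun_prop

lemma matNorm_mul_mul_inv_mulVec {A : Matrix (Fin d) (Fin d) ℝ} (hA : A.IsSymm)
    (hdet : IsUnit A.det) (T : Matrix (Fin d) (Fin d) ℝ) (v : Fin d → ℝ) :
    matNorm (A * T * A) (A⁻¹ *ᵥ v) = matNorm T v := by
  rw [matNorm, matNorm, ← mulVec_mulVec, mulVec_mulVec _ A, mul_nonsing_inv A hdet, one_mulVec,
    ← mulVec_mulVec, dotProduct_mulVec, ← mulVec_transpose, hA.eq, mulVec_mulVec,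
    mul_nonsing_inv A hdet, one_mulVec]

lemma le_ciSup_of_eucNorm_le {f : (Fin d → ℝ) → ℝ} (hf : Continuous f) {S : ℝ}
    {θ : Fin d → ℝ} (hθ : eucNorm θ ≤ S) :
    f θ ≤ ⨆ θ' : {θ' : Fin d → ℝ // eucNorm θ' ≤ S}, f θ' := by
  refine le_ciSup (f := fun θ' : {θ' : Fin d → ℝ // eucNorm θ' ≤ S} => f θ')
    (((isCompact_setOf_eucNorm_le S).bddAbove_image hf.continuousOn).mono ?_) ⟨θ, hθ⟩
  rintro _ ⟨θ', rfl⟩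
  exact ⟨θ', θ'.2, rfl⟩

end Norms

section Model

variable {d : ℕ} (σ : ℝ) (w : ℕ → ℝ) (x : ℕ → Fin d → ℝ) (t : ℕ)

noncomputable def precision (S0 : Matrix (Fin d) (Fin d) ℝ) : Matrix (Fin d) (Fin d) ℝ :=
  S0⁻¹ + (σ ^ 2)⁻¹ • ∑ i ∈ Icc 1 t, w i • vecMulVec (x i) (x i)

lemma SigM_eq_inv_precision (S0 : Matrix (Fin d) (Fin d) ℝ) :
    SigM d σ w x S0 t = (precision σ w x t S0)⁻¹ := rfl

variable {σ w x t}

lemma posSemidef_vecMulVec_self (v : Fin d → ℝ) : (vecMulVec v v).PosSemidef := by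
  simpa using posSemidef_vecMulVec_self_star v

lemma posDef_precision {S0 : Matrix (Fin d) (Fin d) ℝ} (hS0 : S0.PosDef)
    (hw : ∀ i ∈ Icc 1 t, 0 ≤ w i) : (precision σ w x t S0).PosDef :=
  hS0.inv.add_posSemidef <| .smul (posSemidef_sum _ fun i hi =>
    .smul (posSemidef_vecMulVec_self (x i)) (hw i hi)) (by positivity)

lemma posSemidef_TilM {St0 : Matrix (Fin d) (Fin d) ℝ} (hSt0 : St0.PosDef) :
    (TilM d σ w x St0 t).PosSemidef :=
  (hSt0.inv.add_posSemidef <| .smul (posSemidef_sum _ fun i _ =>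
    .smul (posSemidef_vecMulVec_self (x i)) (sq_nonneg (w i)))
    (by positivity)).inv.posSemidef

lemma precision_mulVec (S0 : Matrix (Fin d) (Fin d) ℝ) (θ : Fin d → ℝ) :
    precision σ w x t S0 *ᵥ θ =
      S0⁻¹ *ᵥ θ + (σ ^ 2)⁻¹ • ∑ i ∈ Icc 1 t, (w i * (θ ⬝ᵥ x i)) • x i := by
  simp only [precision, add_mulVec, smul_mulVec, sum_mulVec, vecMulVec_mulVec,
    op_smul_eq_smul, smul_smul, dotProduct_comm (x _)]

lemma muV_sub_eq {S0 : Matrix (Fin d) (Fin d) ℝ} (hdet : IsUnit (precision σ w x t S0).det)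
    {y η : ℕ → ℝ} {θ : Fin d → ℝ} (hy : ∀ i ∈ Icc 1 t, y i = θ ⬝ᵥ x i + η i) (μ0 : Fin d → ℝ) :
    muV d σ w x y S0 μ0 t - θ = SigM d σ w x S0 t *ᵥ
      (S0⁻¹ *ᵥ (μ0 - θ) + (σ ^ 2)⁻¹ • ∑ i ∈ Icc 1 t, (w i * η i) • x i) := by
  have hθ : θ = SigM d σ w x S0 t *ᵥ (precision σ w x t S0 *ᵥ θ) := by
    rw [SigM_eq_inv_precision, mulVec_mulVec, nonsing_inv_mul _ hdet, one_mulVec]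
  conv_lhs => rw [hθ]
  rw [muV, ← mulVec_sub, precision_mulVec, add_sub_add_comm, ← mulVec_sub, ← smul_sub,
    ← sum_sub_distrib]
  congr 3
  refine sum_congr rfl fun i hi => ?_
  rw [← sub_smul, hy i hi]
  ring_nf

end Model

theorem stmt14_general (d t : ℕ)
    (σ S : ℝ)
    (x : ℕ → Fin d → ℝ) (w : ℕ → ℝ) (hw : ∀ i, 1 ≤ i → i ≤ t → 0 < w i)
    (η : ℕ → ℝ) (θstar : Fin d → ℝ) (hθ : eucNorm θstar ≤ S)
    (y : ℕ → ℝ) (hy : ∀ i, 1 ≤ i → i ≤ t → y i = θstar ⬝ᵥ x i + η i)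
    (μ0 : Fin d → ℝ) (S0 St0 : Matrix (Fin d) (Fin d) ℝ)
    (hS0 : S0.PosDef) (hSt0 : St0.PosDef) :
    matNorm ((SigM d σ w x S0 t)⁻¹ * TilM d σ w x St0 t * (SigM d σ w x S0 t)⁻¹)
        (muV d σ w x y S0 μ0 t - θstar) ≤
      (⨆ θ : {θ : Fin d → ℝ // eucNorm θ ≤ S},
          matNorm (TilM d σ w x St0 t) (S0⁻¹.mulVec (μ0 - (θ : Fin d → ℝ))))
        + (σ ^ 2)⁻¹ *
          matNorm (TilM d σ w x St0 t) (∑ i ∈ Finset.Icc 1 t, (w i * η i) • x i) := by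
  have hP : (precision σ w x t S0).PosDef :=
    posDef_precision hS0 fun i hi => (hw i (mem_Icc.mp hi).1 (mem_Icc.mp hi).2).le
  have hPdet : IsUnit (precision σ w x t S0).det := (isUnit_iff_isUnit_det _).mp hP.isUnit
  set T := TilM d σ w x St0 t
  have hT : T.PosSemidef := posSemidef_TilM hSt0
  have hsup : matNorm T (S0⁻¹ *ᵥ (μ0 - θstar)) ≤
      ⨆ θ : {θ : Fin d → ℝ // eucNorm θ ≤ S}, matNorm T (S0⁻¹ *ᵥ (μ0 - θ)) :=
    le_ciSup_of_eucNorm_le (f := fun θ => matNorm T (S0⁻¹ *ᵥ (μ0 - θ)))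
      ((continuous_matNorm T).comp (by fun_prop)) hθ
  calc _ = matNorm T (S0⁻¹ *ᵥ (μ0 - θstar) +
        (σ ^ 2)⁻¹ • ∑ i ∈ Icc 1 t, (w i * η i) • x i) := by
        rw [muV_sub_eq hPdet (fun i hi => hy i (mem_Icc.mp hi).1 (mem_Icc.mp hi).2),
          SigM_eq_inv_precision, nonsing_inv_nonsing_inv _ hPdet,
          matNorm_mul_mul_inv_mulVec (isHermitian_iff_isSymm.mp hP.isHermitian) hPdet]
    _ ≤ _ := by
        grw [matNorm_add_le hT, matNorm_smul hT, abs_of_nonneg (by positivity), ← hsup]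

theorem stmt14 (d t : ℕ) (hd : 1 ≤ d) (ht : 1 ≤ t)
    (σ S : ℝ) (hσ : 0 < σ) (hS : 0 ≤ S)
    (x : ℕ → Fin d → ℝ) (w : ℕ → ℝ) (hw : ∀ i, 1 ≤ i → i ≤ t → 0 < w i)
    (η : ℕ → ℝ) (θstar : Fin d → ℝ) (hθ : eucNorm θstar ≤ S)
    (y : ℕ → ℝ) (hy : ∀ i, 1 ≤ i → i ≤ t → y i = θstar ⬝ᵥ x i + η i)
    (μ0 : Fin d → ℝ) (S0 St0 : Matrix (Fin d) (Fin d) ℝ)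
    (hS0 : S0.PosDef) (hSt0 : St0.PosDef) :
    matNorm ((SigM d σ w x S0 t)⁻¹ * TilM d σ w x St0 t * (SigM d σ w x S0 t)⁻¹)
        (muV d σ w x y S0 μ0 t - θstar) ≤
      (⨆ θ : {θ : Fin d → ℝ // eucNorm θ ≤ S},
          matNorm (TilM d σ w x St0 t) (S0⁻¹.mulVec (μ0 - (θ : Fin d → ℝ))))
        + (σ ^ 2)⁻¹ *
          matNorm (TilM d σ w x St0 t) (∑ i ∈ Finset.Icc 1 t, (w i * η i) • x i) :=
  stmt14_general d t σ S x w hw η θstar hθ y hy μ0 S0 St0 hS0 hSt0
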